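/- For every k ≥ 1, the budding construction defines a bijection B : A^{>1}_2(k+1) ∪ ⋃_{l=0}^{k−1} A_2(k−l) → A^1_2(k+1), and this bijection preserves the size of the automorphism group: |Aut(B(G))| = |Aut(G)| for every G in the domain. -/

import Mathlib

open Finset

/-! ### Functions on `ℂ^m` and Wirtinger derivatives -/

/-- Points of `ℂ^m`. -/
abbrev Cm (m : ℕ) := Fin m → ℂ

/-- Complex-valued functions on `ℂ^m`. -/
abbrev Fn (m : ℕ) := Cm m → ℂ

/-- The Wirtinger derivative `∂/∂z^p`. -/
noncomputable def dz {m : ℕ} (p : Fin m) (f : Fn m) : Fn m := fun x =>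
  (2 : ℂ)⁻¹ * (fderiv ℝ f x (Pi.single p 1) - Complex.I * fderiv ℝ f x (Pi.single p Complex.I))

/-- The Wirtinger derivative `∂/∂z̄^p`. -/
noncomputable def dzbar {m : ℕ} (p : Fin m) (f : Fn m) : Fn m := fun x =>
  (2 : ℂ)⁻¹ * (fderiv ℝ f x (Pi.single p 1) + Complex.I * fderiv ℝ f x (Pi.single p Complex.I))

/-- Iterated holomorphic derivatives `∂^{|L|} f / ∂z^{L}`. -/
noncomputable def dzList {m : ℕ} (L : List (Fin m)) (f : Fn m) : Fn m := L.foldr dz f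

/-- Iterated antiholomorphic derivatives `∂^{|L|} f / ∂z̄^{L}`. -/
noncomputable def dzbarList {m : ℕ} (L : List (Fin m)) (f : Fn m) : Fn m := L.foldr dzbar f

/-- The matrix `g_{p q̄} = ∂² Φ_{-1} / ∂z^p ∂z̄^q` of the (formal) Kähler metric determined
by a formal potential `Φ` (given by its coefficients `Φ w`, `w ≥ -1`). -/
noncomputable def gMat {m : ℕ} (Φ : ℤ → Fn m) (x : Cm m) : Matrix (Fin m) (Fin m) ℂ :=
  Matrix.of fun p q => dzbar q (dz p (Φ (-1))) x

/-- The entries `g^{q̄ p}` of the pointwise inverse of the metric matrix. -/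
noncomputable def gInv {m : ℕ} (Φ : ℤ → Fn m) (q p : Fin m) : Fn m := fun x => (gMat Φ x)⁻¹ q p

/-- A formal potential is admissible on `U` when all its coefficients are smooth on `U`
and the metric matrix is invertible at every point of `U`. -/
def PotentialOK {m : ℕ} (Φ : ℤ → Fn m) (U : Set (Cm m)) : Prop :=
  (∀ w : ℤ, -1 ≤ w → ContDiffOn ℝ (⊤ : ℕ∞) (Φ w) U) ∧ ∀ x ∈ U, IsUnit (gMat Φ x)

/-! ### Weighted acyclic graphs with `n` external vertices -/

/-- A weighted acyclic graph with `n` (numbered, distinct) external vertices: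
finitely many vertices and directed edges (parallel edges allowed, no directed cycles),
every internal vertex (i.e. vertex not in the range of `ext`) has weight `≥ -1`, weight `-1`
internal vertices have degree at least 3, every internal vertex has at least one incoming and
one outgoing edge, the first external vertex is a source and the last one is a sink.
External vertices carry the (irrelevant) weight `0` by convention. -/
structure WGraph (n : ℕ) where
  nV : ℕ
  nE : ℕ
  head : Fin nE → Fin nV
  tail : Fin nE → Fin nV
  ext : Fin n ↪ Fin nV
  wt : Fin nV → ℤ
  acyclic : ∀ v, ¬ Relation.TransGen (fun a b => ∃ e, tail e = a ∧ head e = b) v v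
  wt_ext : ∀ i, wt (ext i) = 0
  wt_ge : ∀ v, (∀ i, ext i ≠ v) → -1 ≤ wt v
  internal_in : ∀ v, (∀ i, ext i ≠ v) → ∃ e, head e = v
  internal_out : ∀ v, (∀ i, ext i ≠ v) → ∃ e, tail e = v
  wt_neg_deg : ∀ v, (∀ i, ext i ≠ v) → wt v = -1 →
    3 ≤ (univ.filter fun e => head e = v).card + (univ.filter fun e => tail e = v).card
  first_source : ∀ (e) (i : Fin n), head e = ext i → (i : ℕ) ≠ 0
  last_sink : ∀ (e) (i : Fin n), tail e = ext i → (i : ℕ) ≠ n - 1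

namespace WGraph

variable {n : ℕ}

/-- A vertex is internal when it is not one of the external vertices. -/
def Internal (G : WGraph n) (v : Fin G.nV) : Prop := ∀ i, G.ext i ≠ v

/-- `G.edgeRel a b` holds when there is an edge from `a` to `b`. -/
def edgeRel (G : WGraph n) (a b : Fin G.nV) : Prop := ∃ e, G.tail e = a ∧ G.head e = b

/-- Reachability along directed paths (reflexive-transitive closure of `edgeRel`);
`G.Reach a b` with `a ≠ b` says that `b` is a successor of `a`. -/
def Reach (G : WGraph n) : Fin G.nV → Fin G.nV → Prop := Relation.ReflTransGen G.edgeRel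

/-- Number of incoming edges of a vertex. -/
def inDeg (G : WGraph n) (v : Fin G.nV) : ℕ := (univ.filter fun e => G.head e = v).card

/-- Number of outgoing edges of a vertex. -/
def outDeg (G : WGraph n) (v : Fin G.nV) : ℕ := (univ.filter fun e => G.tail e = v).card

/-- Total weight `W(G) = |E_G| + Σ_{v internal} w(v)` (external vertices have weight 0). -/
def W (G : WGraph n) : ℤ := (G.nE : ℤ) + ∑ v, G.wt v

/-- Isomorphism of weighted graphs with numbered external vertices: bijections of
vertices and edges preserving heads, tails, the numbered external vertices, and weights. -/
def Iso (G G' : WGraph n) : Prop :=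
  ∃ (σ : Fin G.nV ≃ Fin G'.nV) (τ : Fin G.nE ≃ Fin G'.nE),
    (∀ e, G'.head (τ e) = σ (G.head e)) ∧ (∀ e, G'.tail (τ e) = σ (G.tail e)) ∧
    (∀ i, G'.ext i = σ (G.ext i)) ∧ (∀ v, G'.wt (σ v) = G.wt v)

/-- The order `|Aut(G)|` of the automorphism group of `G`. -/
noncomputable def autCard (G : WGraph n) : ℕ :=
  Nat.card {p : (Fin G.nV ≃ Fin G.nV) × (Fin G.nE ≃ Fin G.nE) //
    (∀ e, G.head (p.2 e) = p.1 (G.head e)) ∧ (∀ e, G.tail (p.2 e) = p.1 (G.tail e)) ∧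
    (∀ i, G.ext i = p.1 (G.ext i)) ∧ (∀ v, G.wt (p.1 v) = G.wt v)}

/-- The number of (concretely presented) graphs isomorphic to `G`. -/
noncomputable def classCard (G : WGraph n) : ℕ := Nat.card {G' : WGraph n // G.Iso G'}

end WGraph

/-! ### Labellings and partition functions -/

/-- A labelling of a graph assigns to each edge `e` a pair of indices in `{1, …, m}`:
`(l e).1` is the label of `e` at its tail (used as an antiholomorphic index there) and
`(l e).2` is the label of `e` at its head (used as a holomorphic index there).  This is
exactly the data of an index `l(v,e)` for every incident pair of a vertex and an edge. -/
abbrev Labelling (m : ℕ) {n : ℕ} (G : WGraph n) := Fin G.nE → Fin m × Fin m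

/-- The labels assigned at `v` to the incoming edges of `v` (in the canonical edge order). -/
def inLabels {m n : ℕ} (G : WGraph n) (l : Labelling m G) (v : Fin G.nV) : List (Fin m) :=
  ((List.finRange G.nE).filter fun e => G.head e = v).map fun e => (l e).2

/-- The labels assigned at `v` to the outgoing edges of `v` (in the canonical edge order). -/
def outLabels {m n : ℕ} (G : WGraph n) (l : Labelling m G) (v : Fin G.nV) : List (Fin m) :=
  ((List.finRange G.nE).filter fun e => G.tail e = v).map fun e => (l e).1

/-- The factor `F(v)` associated to a vertex: the mixed partial derivative
`∂^{p+q} f_k/∂z^{i_1}⋯∂z^{i_p}∂z̄^{j_1}⋯∂z̄^{j_q}` of `f_k` if `v` is the `k`-th external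
vertex, and `-∂^{p+q} Φ_w/∂z^{i_1}⋯∂z^{i_p}∂z̄^{j_1}⋯∂z̄^{j_q}` if `v` is internal of
weight `w`, where the holomorphic indices are the labels of the incoming edges at `v` and the
antiholomorphic indices are the labels of the outgoing edges at `v`. -/
noncomputable def vertexFn {m n : ℕ} (Φ : ℤ → Fn m) (G : WGraph n) (l : Labelling m G)
    (f : Fin n → Fn m) (v : Fin G.nV) : Fn m :=
  if h : ∃ i, G.ext i = v then
    dzList (inLabels G l v) (dzbarList (outLabels G l v) (f h.choose))
  else
    fun x => -(dzList (inLabels G l v) (dzbarList (outLabels G l v) (Φ (G.wt v))) x)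

/-- The partition function `Λ^l_G(f_1, …, f_n)` of a labelled graph: the product over all
vertices of the vertex factors and over all edges `e` (from `u` to `v`, with `s = l(u,e)`,
`r = l(v,e)`) of the factors `g^{s̄ r}`. -/
noncomputable def Lam {m n : ℕ} (Φ : ℤ → Fn m) (G : WGraph n) (l : Labelling m G)
    (f : Fin n → Fn m) : Fn m :=
  fun x => (∏ v, vertexFn Φ G l f v x) * ∏ e, gInv Φ (l e).1 (l e).2 x

/-- The partition function `Γ_G(f_1, …, f_n)`: the contraction, along the edges of `G` and
using the inverse metric `g^{q̄p}`, of the tensors of partial derivatives attached to the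
vertices; equivalently the sum over all labellings of `Λ^l_G(f_1, …, f_n)`. -/
noncomputable def Gam {m n : ℕ} (Φ : ℤ → Fn m) (G : WGraph n) (f : Fin n → Fn m) : Fn m :=
  fun x => ∑ l : Labelling m G, Lam Φ G l f x

/-- The operator `D_k(f_1, …, f_n) = Σ_{G ∈ 𝒜_n(k)} Γ_G(f_1, …, f_n)/|Aut(G)|`, the sum
being over isomorphism classes of weighted acyclic graphs of total weight `k`; concretely
each isomorphism class is summed via all its concrete representatives, each weighted by
the reciprocal of the number of such representatives. -/
noncomputable def Dk (m : ℕ) (Φ : ℤ → Fn m) (n k : ℕ) (f : Fin n → Fn m) : Fn m := fun x =>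
  ∑ᶠ G : WGraph n, if G.W = (k : ℤ) then
    Gam Φ G f x / ((G.classCard : ℂ) * (G.autCard : ℂ)) else 0

/-- The coefficient of `h^k` in the `ℂ[[h]]`-bilinear extension of the star product
`f₁ ⋆ f₂ = Σ_k D_k(f₁,f₂) h^k` to formal power series `Σ f_i h^i`, `Σ g_j h^j` of functions
(a formal power series is encoded by its coefficient sequence `ℕ → Fn m`). -/
noncomputable def starCoeff {m : ℕ} (Φ : ℤ → Fn m) (f g : ℕ → Fn m) (k : ℕ) : Fn m := fun x =>
  ∑ p ∈ Finset.range (k + 1), ∑ q ∈ Finset.range (k + 1 - p),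
    Dk m Φ 2 (k - p - q) ![f p, g q] x
/-! ### The budding construction -/

/-- `Budded l G G'` says that `G'` is obtained from `G` (a weighted acyclic graph with two
external vertices) by the budding construction: the first external vertex of `G` is
converted into an internal vertex of weight `l`, and a new first external vertex is added,
connected to it by a single edge. -/
def Budded (l : ℤ) (G G' : WGraph 2) : Prop :=
  ∃ (σ : Fin G'.nV ≃ Fin G.nV ⊕ Unit) (τ : Fin G'.nE ≃ Fin G.nE ⊕ Unit),
    (∀ e, G'.head (τ.symm (.inl e)) = σ.symm (.inl (G.head e))) ∧
    (∀ e, G'.tail (τ.symm (.inl e)) = σ.symm (.inl (G.tail e))) ∧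
    G'.tail (τ.symm (.inr ())) = σ.symm (.inr ()) ∧
    G'.head (τ.symm (.inr ())) = σ.symm (.inl (G.ext 0)) ∧
    G'.ext 0 = σ.symm (.inr ()) ∧
    G'.ext 1 = σ.symm (.inl (G.ext 1)) ∧
    (∀ v, v ≠ G.ext 0 → G'.wt (σ.symm (.inl v)) = G.wt v) ∧
    G'.wt (σ.symm (.inl (G.ext 0))) = l

/-- The domain of the budding map `B : 𝒜₂^{>1}(k+1) ∪ ⋃_{l=0}^{k-1} 𝒜₂(k-l) → 𝒜₂^1(k+1)`:
`BudDom k l G` says that either `l = -1` and `G ∈ 𝒜₂^{>1}(k+1)` (total weight `k+1` and the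
first external vertex has degree greater than one), or `0 ≤ l ≤ k-1` and `G ∈ 𝒜₂(k-l)`. -/
def BudDom (k : ℕ) (l : ℤ) (G : WGraph 2) : Prop :=
  (l = -1 ∧ G.W = (k : ℤ) + 1 ∧ 1 < G.outDeg (G.ext 0)) ∨
  (0 ≤ l ∧ l ≤ (k : ℤ) - 1 ∧ G.W = (k : ℤ) - l)

/-! ### Statement 14 -/
open Finset

namespace Stmt14Aux

lemma fin2 (i : Fin 2) : i = 0 ∨ i = 1 := by
  match i with
  | 0 => exact .inl rfl
  | 1 => exact .inr rfl

lemma inl_getLeft {α β : Type*} (x : α ⊕ β) (h : x.isLeft) : Sum.inl (x.getLeft h) = x := by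
  cases x <;> simp at h ⊢

lemma isLeft_aux {α β : Type*} (S : α ⊕ Unit ≃ β ⊕ Unit) (hS : S (.inr ()) = .inr ()) (a : α) :
    (S (.inl a)).isLeft := by
  cases h : S (.inl a) with
  | inl b => rfl
  | inr u =>
    cases u
    exfalso
    have : (Sum.inl a : α ⊕ Unit) = .inr () := S.injective (h.trans hS.symm)
    simp at this

lemma symm_inr {α β : Type*} (S : α ⊕ Unit ≃ β ⊕ Unit) (hS : S (.inr ()) = .inr ()) :
    S.symm (.inr ()) = .inr () := by rw [← hS, Equiv.symm_apply_apply]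

/-- A bijection of `α ⊕ Unit ≃ β ⊕ Unit` fixing the point restricts to `α ≃ β`. -/
def sumUnitCongr {α β : Type*} (S : α ⊕ Unit ≃ β ⊕ Unit) (hS : S (.inr ()) = .inr ()) :
    α ≃ β where
  toFun a := (S (.inl a)).getLeft (isLeft_aux S hS a)
  invFun b := (S.symm (.inl b)).getLeft (isLeft_aux S.symm (symm_inr S hS) b)
  left_inv a := by
    apply Sum.inl_injective
    rw [inl_getLeft, inl_getLeft, Equiv.symm_apply_apply]
  right_inv b := by
    apply Sum.inl_injective
    rw [inl_getLeft, inl_getLeft, Equiv.apply_symm_apply]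

lemma sumUnitCongr_spec {α β : Type*} (S : α ⊕ Unit ≃ β ⊕ Unit) (hS : S (.inr ()) = .inr ())
    (a : α) : S (.inl a) = .inl (sumUnitCongr S hS a) := (inl_getLeft _ _).symm

lemma card_compl {n : ℕ} (a : Fin n) : Fintype.card {x : Fin n // x ≠ a} = n - 1 := by
  have h1 : Fintype.card {x : Fin n // ¬ x = a} =
      Fintype.card (Fin n) - Fintype.card {x : Fin n // x = a} := Fintype.card_subtype_compl _
  simpa [Fintype.card_subtype_eq] using h1

noncomputable def delSub {n : ℕ} (a : Fin n) : {x : Fin n // x ≠ a} ≃ Fin (n - 1) :=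
  Fintype.equivFinOfCardEq (card_compl a)

/-- Deleting a point of `Fin n`. -/
noncomputable def delFin {n : ℕ} (a : Fin n) : Fin n ≃ Fin (n - 1) ⊕ Unit where
  toFun v := if h : v = a then .inr () else .inl (delSub a ⟨v, h⟩)
  invFun s := Sum.elim (fun u => ((delSub a).symm u).1) (fun _ => a) s
  left_inv v := by
    by_cases h : v = a
    · simp [h]
    · simp only [dif_neg h, Sum.elim_inl, Equiv.symm_apply_apply]
  right_inv s := by
    cases s with
    | inl u =>
      simp only [Sum.elim_inl]
      refine (dif_neg ((delSub a).symm u).2).trans ?_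
      simp
    | inr u => cases u; simp

lemma delFin_self {n : ℕ} (a : Fin n) : delFin a a = .inr () := by simp [delFin]

lemma delFin_eq_inr_iff {n : ℕ} (a v : Fin n) : delFin a v = .inr () ↔ v = a := by
  constructor
  · intro h
    by_contra hv
    simp [delFin, hv] at h
  · rintro rfl; exact delFin_self _

lemma delFin_exists_inl {n : ℕ} {a v : Fin n} (h : v ≠ a) : ∃ u, delFin a v = .inl u := by
  cases hs : delFin a v with
  | inl u => exact ⟨u, rfl⟩
  | inr u => cases u; exact absurd ((delFin_eq_inr_iff a v).mp hs) h

/-- Counting a filter over `Fin nE'` through an equivalence with `Fin nE ⊕ Unit`. -/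
lemma card_filter_equiv_sum {nE nE' : ℕ} (τ : Fin nE' ≃ Fin nE ⊕ Unit) (P : Fin nE' → Prop)
    [DecidablePred P] :
    (univ.filter P).card =
      (univ.filter fun e => P (τ.symm (.inl e))).card + (if P (τ.symm (.inr ())) then 1 else 0) := by
  rw [Finset.card_filter, Finset.card_filter]
  rw [Fintype.sum_equiv τ _ (fun s => if P (τ.symm s) then 1 else 0) (fun a => by simp)]
  rw [Fintype.sum_sum_type]
  rw [← Finset.card_filter]
  by_cases h : P (τ.symm (.inr ())) <;> simp [Fintype.sum_unique, h]

lemma sum_int_equiv_sum {nV nV' : ℕ} (σ : Fin nV' ≃ Fin nV ⊕ Unit) (f : Fin nV' → ℤ) :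
    ∑ v, f v = ∑ v, f (σ.symm (.inl v)) + f (σ.symm (.inr ())) := by
  rw [Fintype.sum_equiv σ _ (fun s => f (σ.symm s)) (fun a => by simp)]
  rw [Fintype.sum_sum_type]
  simp [Fintype.sum_unique]

end Stmt14Aux

namespace WGraph
open Stmt14Aux

variable (G : WGraph 2)

lemma head_ne_ext0 (e : Fin G.nE) : G.head e ≠ G.ext 0 := by
  intro h
  exact G.first_source e 0 h rfl

lemma tail_ne_ext1 (e : Fin G.nE) : G.tail e ≠ G.ext 1 := by
  intro h
  exact G.last_sink e 1 h rfl

lemma internal_of_ne {G : WGraph 2} {v : Fin G.nV} (h0 : G.ext 0 ≠ v) (h1 : G.ext 1 ≠ v) :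
    ∀ i, G.ext i ≠ v := by
  intro i; rcases fin2 i with rfl | rfl <;> assumption

lemma sum_inDeg : ∑ v, G.inDeg v = G.nE := by
  unfold inDeg
  simp only [Finset.card_filter]
  rw [Finset.sum_comm]
  simp

lemma sum_outDeg : ∑ v, G.outDeg v = G.nE := by
  unfold outDeg
  simp only [Finset.card_filter]
  rw [Finset.sum_comm]
  simp

/-- The number of strict predecessors of a vertex. -/
noncomputable def mu (v : Fin G.nV) : ℕ :=
  @Finset.card _ (@Finset.filter _ (fun u => Relation.TransGen G.edgeRel u v)
    (Classical.decPred _) univ)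

lemma mu_lt {G : WGraph 2} {u v : Fin G.nV} (h : G.edgeRel u v) : G.mu u < G.mu v := by
  unfold mu
  apply Finset.card_lt_card
  rw [Finset.ssubset_iff_of_subset]
  · refine ⟨u, ?_, ?_⟩
    · simp only [Finset.mem_filter, Finset.mem_univ, true_and]
      exact Relation.TransGen.single h
    · simp only [Finset.mem_filter, Finset.mem_univ, true_and]
      exact G.acyclic u
  · intro x hx
    simp only [Finset.mem_filter, Finset.mem_univ, true_and] at hx ⊢
    exact hx.trans (Relation.TransGen.single h)

lemma reach_of_out (G : WGraph 2) : ∀ v, (∃ e, G.tail e = v) →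
    Relation.ReflTransGen G.edgeRel (G.ext 0) v := by
  suffices H : ∀ N v, G.mu v < N → (∃ e, G.tail e = v) →
      Relation.ReflTransGen G.edgeRel (G.ext 0) v by
    exact fun v hv => H (G.mu v + 1) v (Nat.lt_succ_self _) hv
  intro N
  induction N with
  | zero => intro v h; omega
  | succ N ih =>
    rintro v hN ⟨e, he⟩
    by_cases h0 : G.ext 0 = v
    · exact h0 ▸ Relation.ReflTransGen.refl
    have h1 : G.ext 1 ≠ v := fun h => G.tail_ne_ext1 e (he.trans h.symm)
    obtain ⟨e', he'⟩ := G.internal_in v (internal_of_ne h0 h1)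
    have hrel : G.edgeRel (G.tail e') v := ⟨e', rfl, he'⟩
    have hmu := mu_lt hrel
    exact (ih (G.tail e') (by omega) ⟨e', rfl⟩).tail hrel

lemma W_eq_zero (G : WGraph 2) (h : G.outDeg (G.ext 0) = 0) : G.W = 0 := by
  have hout0 : ∀ e', G.tail e' ≠ G.ext 0 := by
    intro e' he'
    have hm : e' ∈ univ.filter fun e'' => G.tail e'' = G.ext 0 := by simp [he']
    have hc : (univ.filter fun e'' => G.tail e'' = G.ext 0) = ∅ := Finset.card_eq_zero.mp h
    rw [hc] at hm
    exact absurd hm (Finset.notMem_empty _)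
  have hno : ∀ e : Fin G.nE, False := by
    intro e
    rcases (G.reach_of_out (G.tail e) ⟨e, rfl⟩).cases_head with h1 | ⟨c, ⟨e₁, ht₁, -⟩, -⟩
    · exact hout0 e h1.symm
    · exact hout0 e₁ ht₁
  have hE : G.nE = 0 := by
    by_contra hEc
    exact hno ⟨0, Nat.pos_of_ne_zero hEc⟩
  have hwt : ∀ v, G.wt v = 0 := by
    intro v
    by_cases hi : ∀ i, G.ext i ≠ v
    · exact absurd (G.internal_in v hi) (by rintro ⟨e, -⟩; exact hno e)
    · push_neg at hi
      obtain ⟨i, hi⟩ := hi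
      rw [← hi, G.wt_ext]
  unfold WGraph.W
  rw [hE]
  simp [hwt]

lemma one_le_W (G : WGraph 2) (h : 1 ≤ G.nE) : 1 ≤ G.W := by
  classical
  have hsum : -(((univ.filter fun v => (∀ i, G.ext i ≠ v) ∧ G.wt v = -1).card : ℤ))
      ≤ ∑ v, G.wt v := by
    have hpt : ∀ v ∈ (univ : Finset (Fin G.nV)),
        (if (∀ i, G.ext i ≠ v) ∧ G.wt v = -1 then (-1 : ℤ) else 0) ≤ G.wt v := by
      intro v _
      split_ifs with hv
      · exact le_of_eq hv.2.symm
      · by_cases hi : ∀ i, G.ext i ≠ v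
        · have h1 := G.wt_ge v hi
          have h2 : G.wt v ≠ -1 := fun hw => hv ⟨hi, hw⟩
          omega
        · push_neg at hi
          obtain ⟨i, hi⟩ := hi
          rw [← hi, G.wt_ext]
    calc -(((univ.filter fun v => (∀ i, G.ext i ≠ v) ∧ G.wt v = -1).card : ℤ))
        = ∑ v ∈ (univ.filter fun v => (∀ i, G.ext i ≠ v) ∧ G.wt v = -1), (-1 : ℤ) := by
          rw [Finset.sum_const, nsmul_eq_mul, mul_neg_one]
      _ = ∑ v, (if (∀ i, G.ext i ≠ v) ∧ G.wt v = -1 then (-1 : ℤ) else 0) :=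
          Finset.sum_filter _ _
      _ ≤ ∑ v, G.wt v := Finset.sum_le_sum hpt
  have hdeg : 3 * (univ.filter fun v => (∀ i, G.ext i ≠ v) ∧ G.wt v = -1).card ≤ 2 * G.nE := by
    calc 3 * (univ.filter fun v => (∀ i, G.ext i ≠ v) ∧ G.wt v = -1).card
        = ∑ _v ∈ (univ.filter fun v => (∀ i, G.ext i ≠ v) ∧ G.wt v = -1), 3 := by
          rw [Finset.sum_const, smul_eq_mul, mul_comm]
      _ ≤ ∑ v ∈ (univ.filter fun v => (∀ i, G.ext i ≠ v) ∧ G.wt v = -1),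
            (G.inDeg v + G.outDeg v) := by
          refine Finset.sum_le_sum ?_
          intro v hv
          rw [Finset.mem_filter] at hv
          exact G.wt_neg_deg v hv.2.1 hv.2.2
      _ ≤ ∑ v, (G.inDeg v + G.outDeg v) :=
          Finset.sum_le_sum_of_subset (Finset.filter_subset _ _)
      _ = 2 * G.nE := by
          rw [Finset.sum_add_distrib, G.sum_inDeg, G.sum_outDeg]
          ring
  have hW : G.W = (G.nE : ℤ) + ∑ v, G.wt v := rfl
  set s := ∑ v, G.wt v with hs
  set N := (univ.filter fun v => (∀ i, G.ext i ≠ v) ∧ G.wt v = -1).card with hN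
  omega

end WGraph

namespace Stmt14Aux
open WGraph

/-- Bundled form of the `Budded` relation, for a fixed pair of equivalences. -/
structure BudData (l : ℤ) (G G' : WGraph 2) (σ : Fin G'.nV ≃ Fin G.nV ⊕ Unit)
    (τ : Fin G'.nE ≃ Fin G.nE ⊕ Unit) : Prop where
  head_inl : ∀ e, G'.head (τ.symm (.inl e)) = σ.symm (.inl (G.head e))
  tail_inl : ∀ e, G'.tail (τ.symm (.inl e)) = σ.symm (.inl (G.tail e))
  tail_bud : G'.tail (τ.symm (.inr ())) = σ.symm (.inr ())
  head_bud : G'.head (τ.symm (.inr ())) = σ.symm (.inl (G.ext 0))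
  ext0 : G'.ext 0 = σ.symm (.inr ())
  ext1 : G'.ext 1 = σ.symm (.inl (G.ext 1))
  wt_inl : ∀ v, v ≠ G.ext 0 → G'.wt (σ.symm (.inl v)) = G.wt v
  wt_bud : G'.wt (σ.symm (.inl (G.ext 0))) = l

lemma budded_iff {l : ℤ} {G G' : WGraph 2} :
    Budded l G G' ↔ ∃ σ τ, BudData l G G' σ τ := by
  constructor
  · rintro ⟨σ, τ, h1, h2, h3, h4, h5, h6, h7, h8⟩
    exact ⟨σ, τ, ⟨h1, h2, h3, h4, h5, h6, h7, h8⟩⟩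
  · rintro ⟨σ, τ, h⟩
    exact ⟨σ, τ, h.head_inl, h.tail_inl, h.tail_bud, h.head_bud, h.ext0, h.ext1,
      h.wt_inl, h.wt_bud⟩

section BudLemmas

variable {l : ℤ} {G G' : WGraph 2} {σ : Fin G'.nV ≃ Fin G.nV ⊕ Unit}
  {τ : Fin G'.nE ≃ Fin G.nE ⊕ Unit}

lemma BudData.head_eq (h : BudData l G G' σ τ) (e' : Fin G'.nE) :
    G'.head e' = σ.symm (.inl (Sum.elim G.head (fun _ => G.ext 0) (τ e'))) := by
  rcases hs : τ e' with e | u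
  · have he : e' = τ.symm (.inl e) := by rw [← hs, Equiv.symm_apply_apply]
    rw [he, h.head_inl]
    simp
  · cases u
    have he : e' = τ.symm (.inr ()) := by rw [← hs, Equiv.symm_apply_apply]
    rw [he, h.head_bud]
    simp

lemma BudData.tail_eq (h : BudData l G G' σ τ) (e' : Fin G'.nE) :
    G'.tail e' = σ.symm (Sum.map G.tail id (τ e')) := by
  rcases hs : τ e' with e | u
  · have he : e' = τ.symm (.inl e) := by rw [← hs, Equiv.symm_apply_apply]
    rw [he, h.tail_inl]
    simp
  · cases u
    have he : e' = τ.symm (.inr ()) := by rw [← hs, Equiv.symm_apply_apply]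
    rw [he, h.tail_bud]
    simp

lemma BudData.tail_eq_inr_iff (h : BudData l G G' σ τ) (e' : Fin G'.nE) :
    G'.tail e' = σ.symm (.inr ()) ↔ τ e' = .inr () := by
  rw [h.tail_eq]
  constructor
  · intro hh
    have h2 := σ.symm.injective hh
    rcases hs : τ e' with e | u
    · rw [hs] at h2; simp at h2
    · cases u; rfl
  · intro hh; rw [hh]; rfl

lemma BudData.head_ne_inr (h : BudData l G G' σ τ) (e' : Fin G'.nE) :
    G'.head e' ≠ σ.symm (.inr ()) := by
  rw [h.head_eq]
  intro hh
  have h2 := σ.symm.injective hh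
  simp at h2

lemma BudData.inDeg_inl (h : BudData l G G' σ τ) (v : Fin G.nV) :
    G'.inDeg (σ.symm (.inl v)) = G.inDeg v + (if G.ext 0 = v then 1 else 0) := by
  unfold WGraph.inDeg
  rw [card_filter_equiv_sum τ]
  congr 1
  · apply congrArg
    apply Finset.filter_congr
    intro e _
    rw [h.head_inl]
    simp
  · rw [h.head_bud]
    simp

lemma BudData.outDeg_inl (h : BudData l G G' σ τ) (v : Fin G.nV) :
    G'.outDeg (σ.symm (.inl v)) = G.outDeg v := by
  unfold WGraph.outDeg
  rw [card_filter_equiv_sum τ]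
  have h2 : ¬ (G'.tail (τ.symm (.inr ())) = σ.symm (.inl v)) := by
    rw [h.tail_bud]; simp
  rw [if_neg h2, add_zero]
  apply congrArg
  apply Finset.filter_congr
  intro e _
  rw [h.tail_inl]
  simp

lemma BudData.outDeg_ext0 (h : BudData l G G' σ τ) : G'.outDeg (G'.ext 0) = 1 := by
  unfold WGraph.outDeg
  rw [h.ext0, card_filter_equiv_sum τ, if_pos h.tail_bud]
  have h2 : (univ.filter fun e => G'.tail (τ.symm (.inl e)) = σ.symm (.inr ())) = ∅ := by
    apply Finset.filter_false_of_mem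
    intro e _
    rw [h.tail_inl]
    simp
  rw [h2]
  simp

lemma BudData.inDeg_ext0 (h : BudData l G G' σ τ) : G'.inDeg (G'.ext 0) = 0 := by
  unfold WGraph.inDeg
  rw [h.ext0, card_filter_equiv_sum τ]
  have h2 : (univ.filter fun e => G'.head (τ.symm (.inl e)) = σ.symm (.inr ())) = ∅ := by
    apply Finset.filter_false_of_mem
    intro e _
    rw [h.head_inl]
    simp
  have h3 : ¬ (G'.head (τ.symm (.inr ())) = σ.symm (.inr ())) := by
    rw [h.head_bud]; simp
  rw [h2, if_neg h3]
  simp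

lemma BudData.nE_eq (h : BudData l G G' σ τ) : G'.nE = G.nE + 1 := by
  simpa using Fintype.card_congr τ

lemma BudData.W_eq (h : BudData l G G' σ τ) : G'.W = G.W + 1 + l := by
  have hE : G'.nE = G.nE + 1 := h.nE_eq
  have h0 : G'.wt (σ.symm (.inr ())) = 0 := by rw [← h.ext0]; exact G'.wt_ext 0
  have hupd : ∀ v, G'.wt (σ.symm (.inl v)) = Function.update G.wt (G.ext 0) l v := by
    intro v
    rw [Function.update_apply]
    by_cases hv : v = G.ext 0
    · rw [if_pos hv, hv, h.wt_bud]
    · rw [if_neg hv, h.wt_inl v hv]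
  unfold WGraph.W
  rw [sum_int_equiv_sum σ, h0, add_zero, Finset.sum_congr rfl (fun v _ => hupd v),
    Finset.sum_update_of_mem (Finset.mem_univ _), ← Finset.erase_eq,
    Finset.sum_erase _ (G.wt_ext 0), hE]
  push_cast
  ring

end BudLemmas

end Stmt14Aux

namespace Stmt14Aux
open WGraph

variable (G : WGraph 2)

/-- Vertex equivalence for the budded graph. -/
noncomputable def budσ : Fin (G.nV + 1) ≃ Fin G.nV ⊕ Unit := delFin (Fin.last G.nV)

/-- Edge equivalence for the budded graph. -/
noncomputable def budτ : Fin (G.nE + 1) ≃ Fin G.nE ⊕ Unit := delFin (Fin.last G.nE)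

noncomputable def budHead (e : Fin (G.nE + 1)) : Fin (G.nV + 1) :=
  (budσ G).symm (.inl (Sum.elim G.head (fun _ => G.ext 0) (budτ G e)))

noncomputable def budTail (e : Fin (G.nE + 1)) : Fin (G.nV + 1) :=
  (budσ G).symm (Sum.map G.tail id (budτ G e))

noncomputable def budExt (i : Fin 2) : Fin (G.nV + 1) :=
  if i = 0 then (budσ G).symm (.inr ()) else (budσ G).symm (.inl (G.ext 1))

noncomputable def budWt (l : ℤ) (v : Fin (G.nV + 1)) : ℤ :=
  Sum.elim (fun u => if u = G.ext 0 then l else G.wt u) (fun _ => 0) (budσ G v)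

variable {G}

lemma budStep {x y : Fin (G.nV + 1)} (hxy : ∃ e, budTail G e = x ∧ budHead G e = y)
    {u : Fin G.nV} (hx : x = (budσ G).symm (.inl u)) :
    ∃ v, y = (budσ G).symm (.inl v) ∧ G.edgeRel u v := by
  obtain ⟨e, ht, hh⟩ := hxy
  rcases hs : budτ G e with e₀ | u₀
  · have ht2 : (budσ G).symm (.inl (G.tail e₀)) = (budσ G).symm (.inl u) := by
      rw [← hx, ← ht]
      unfold budTail
      rw [hs]
      rfl
    have hu : G.tail e₀ = u := by
      have := (budσ G).symm.injective ht2
      simpa using this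
    refine ⟨G.head e₀, ?_, ⟨e₀, hu, rfl⟩⟩
    rw [← hh]
    unfold budHead
    rw [hs]
    rfl
  · exfalso
    cases u₀
    have ht2 : (budσ G).symm (.inr ()) = (budσ G).symm (.inl u) := by
      rw [← hx, ← ht]
      unfold budTail
      rw [hs]
      rfl
    have := (budσ G).symm.injective ht2
    simp at this

lemma budStays {a b : Fin (G.nV + 1)}
    (h : Relation.TransGen (fun x y => ∃ e, budTail G e = x ∧ budHead G e = y) a b) :
    ∀ u, a = (budσ G).symm (.inl u) →
      ∃ v, b = (budσ G).symm (.inl v) ∧ Relation.TransGen G.edgeRel u v := by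
  induction h with
  | single hstep =>
    intro u hu
    obtain ⟨v, hv, hr⟩ := budStep hstep hu
    exact ⟨v, hv, .single hr⟩
  | tail hab hstep ih =>
    intro u hu
    obtain ⟨w, hw, hr⟩ := ih u hu
    obtain ⟨v, hv, hr2⟩ := budStep hstep hw
    exact ⟨v, hv, hr.tail hr2⟩

variable (G)

lemma budHead_card (u : Fin G.nV) :
    (univ.filter fun e => budHead G e = (budσ G).symm (.inl u)).card
      = G.inDeg u + (if G.ext 0 = u then 1 else 0) := by
  rw [card_filter_equiv_sum (budτ G)]
  congr 1
  · apply congrArg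
    apply Finset.filter_congr
    intro e _
    unfold budHead
    simp
  · unfold budHead
    simp

lemma budTail_card (u : Fin G.nV) :
    (univ.filter fun e => budTail G e = (budσ G).symm (.inl u)).card = G.outDeg u := by
  rw [card_filter_equiv_sum (budτ G)]
  have h2 : ¬ (budTail G ((budτ G).symm (.inr ())) = (budσ G).symm (.inl u)) := by
    unfold budTail
    simp
  rw [if_neg h2, add_zero]
  apply congrArg
  apply Finset.filter_congr
  intro e _
  unfold budTail
  simp

lemma ext1_ne_ext0 (G : WGraph 2) : G.ext 1 ≠ G.ext 0 := by
  intro h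
  have := G.ext.injective h
  exact absurd this (by decide)

/-- The budded graph. -/
noncomputable def bud (l : ℤ) (hl : -1 ≤ l) (hout : 1 ≤ G.outDeg (G.ext 0))
    (hneg : l = -1 → 2 ≤ G.outDeg (G.ext 0)) : WGraph 2 where
  nV := G.nV + 1
  nE := G.nE + 1
  head := budHead G
  tail := budTail G
  ext := ⟨budExt G, by
    intro a b hab
    rcases fin2 a with rfl | rfl <;> rcases fin2 b with rfl | rfl
    · rfl
    · exfalso; unfold budExt at hab; simp at hab
    · exfalso; unfold budExt at hab; simp at hab
    · rfl⟩
  wt := budWt G l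
  acyclic := by
    intro v hv
    rcases hs : budσ G v with u | u₀
    · have hveq : v = (budσ G).symm (.inl u) := by rw [← hs, Equiv.symm_apply_apply]
      obtain ⟨w, hw, hr⟩ := budStays hv u hveq
      have : w = u := by
        have := (budσ G).symm.injective (hw.symm.trans hveq)
        simpa using this
      exact G.acyclic u (this ▸ hr)
    · cases u₀
      have hveq : v = (budσ G).symm (.inr ()) := by rw [← hs, Equiv.symm_apply_apply]
      obtain ⟨b, hstep, hrest⟩ := Relation.TransGen.head'_iff.mp hv
      obtain ⟨e, ht, hh⟩ := hstep
      have hτ : budτ G e = .inr () := by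
        have h2 : (budσ G).symm (Sum.map G.tail id (budτ G e)) = (budσ G).symm (.inr ()) := by
          rw [← hveq]; exact ht
        have h3 := (budσ G).symm.injective h2
        rcases hs2 : budτ G e with e₀ | u₁
        · rw [hs2] at h3; simp at h3
        · cases u₁; rfl
      have hb : b = (budσ G).symm (.inl (G.ext 0)) := by
        rw [← hh]
        unfold budHead
        rw [hτ]
        rfl
      rcases Relation.reflTransGen_iff_eq_or_transGen.mp hrest with heq | htg
      · rw [hveq, hb] at heq
        have := (budσ G).symm.injective heq
        simp at this
      · obtain ⟨w, hw, -⟩ := budStays htg (G.ext 0) hb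
        rw [hveq] at hw
        have := (budσ G).symm.injective hw
        simp at this
  wt_ext := by
    intro i
    rcases fin2 i with rfl | rfl
    · show budWt G l (budExt G 0) = 0
      unfold budExt budWt
      simp
    · show budWt G l (budExt G 1) = 0
      unfold budExt budWt
      simp [ext1_ne_ext0 G, G.wt_ext]
  wt_ge := by
    intro v hv
    rcases hs : budσ G v with u | u₀
    · have hveq : v = (budσ G).symm (.inl u) := by rw [← hs, Equiv.symm_apply_apply]
      show -1 ≤ budWt G l v
      unfold budWt
      rw [hs]
      by_cases hu : u = G.ext 0
      · simpa [hu] using hl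
      · simp only [Sum.elim_inl, if_neg hu]
        refine G.wt_ge u (internal_of_ne (fun h => hu h.symm) ?_)
        intro h1
        refine hv 1 ?_
        show budExt G 1 = v
        rw [hveq]
        unfold budExt
        simp [h1]
    · cases u₀
      exfalso
      refine hv 0 ?_
      show budExt G 0 = v
      unfold budExt
      rw [← hs, Equiv.symm_apply_apply]
      simp
  internal_in := by
    intro v hv
    rcases hs : budσ G v with u | u₀
    · have hveq : v = (budσ G).symm (.inl u) := by rw [← hs, Equiv.symm_apply_apply]
      by_cases hu : u = G.ext 0
      · refine ⟨(budτ G).symm (.inr ()), ?_⟩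
        show budHead G _ = v
        unfold budHead
        rw [hveq, hu]
        simp
      · have hint : ∀ i, G.ext i ≠ u := by
          refine internal_of_ne (fun h => hu h.symm) ?_
          intro h1
          refine hv 1 ?_
          show budExt G 1 = v
          rw [hveq]
          unfold budExt
          simp [h1]
        obtain ⟨e, he⟩ := G.internal_in u hint
        refine ⟨(budτ G).symm (.inl e), ?_⟩
        show budHead G _ = v
        unfold budHead
        rw [hveq]
        simp [he]
    · cases u₀
      exfalso
      refine hv 0 ?_
      show budExt G 0 = v
      unfold budExt
      rw [← hs, Equiv.symm_apply_apply]
      simp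
  internal_out := by
    intro v hv
    rcases hs : budσ G v with u | u₀
    · have hveq : v = (budσ G).symm (.inl u) := by rw [← hs, Equiv.symm_apply_apply]
      by_cases hu : u = G.ext 0
      · have hne : (univ.filter fun e => G.tail e = G.ext 0).Nonempty := by
          apply Finset.card_pos.mp
          have : (univ.filter fun e => G.tail e = G.ext 0).card = G.outDeg (G.ext 0) := rfl
          omega
        obtain ⟨e, he⟩ := hne
        rw [Finset.mem_filter] at he
        refine ⟨(budτ G).symm (.inl e), ?_⟩
        show budTail G _ = v
        unfold budTail
        rw [hveq, hu]
        simp [he.2]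
      · have hint : ∀ i, G.ext i ≠ u := by
          refine internal_of_ne (fun h => hu h.symm) ?_
          intro h1
          refine hv 1 ?_
          show budExt G 1 = v
          rw [hveq]
          unfold budExt
          simp [h1]
        obtain ⟨e, he⟩ := G.internal_out u hint
        refine ⟨(budτ G).symm (.inl e), ?_⟩
        show budTail G _ = v
        unfold budTail
        rw [hveq]
        simp [he]
    · cases u₀
      exfalso
      refine hv 0 ?_
      show budExt G 0 = v
      unfold budExt
      rw [← hs, Equiv.symm_apply_apply]
      simp
  wt_neg_deg := by
    intro v hv hw
    rcases hs : budσ G v with u | u₀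
    · have hveq : v = (budσ G).symm (.inl u) := by rw [← hs, Equiv.symm_apply_apply]
      rw [hveq, budHead_card, budTail_card]
      have hwv : budWt G l v = -1 := hw
      unfold budWt at hwv
      rw [hs] at hwv
      simp only [Sum.elim_inl] at hwv
      by_cases hu : u = G.ext 0
      · rw [if_pos hu] at hwv
        have h2 := hneg hwv
        rw [hu, if_pos rfl]
        omega
      · rw [if_neg hu] at hwv
        have hint : ∀ i, G.ext i ≠ u := by
          refine internal_of_ne (fun h => hu h.symm) ?_
          intro h1
          refine hv 1 ?_
          show budExt G 1 = v
          rw [hveq]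
          unfold budExt
          simp [h1]
        have h4 : 3 ≤ G.inDeg u + G.outDeg u := G.wt_neg_deg u hint hwv
        omega
    · cases u₀
      exfalso
      refine hv 0 ?_
      show budExt G 0 = v
      unfold budExt
      rw [← hs, Equiv.symm_apply_apply]
      simp
  first_source := by
    intro e i h hi
    have hi0 : i = 0 := Fin.ext hi
    subst hi0
    have h2 : budHead G e = (budσ G).symm (.inr ()) := by
      rw [h]
      unfold budExt
      rfl
    unfold budHead at h2
    have := (budσ G).symm.injective h2
    simp at this
  last_sink := by
    intro e i h hi
    have hi1 : i = 1 := Fin.ext hi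
    subst hi1
    have h2 : budTail G e = (budσ G).symm (.inl (G.ext 1)) := by
      rw [h]
      unfold budExt
      rfl
    unfold budTail at h2
    have h3 := (budσ G).symm.injective h2
    rcases hs : budτ G e with e₀ | u₀
    · rw [hs] at h3
      simp only [Sum.map_inl, id_eq, Sum.inl.injEq] at h3
      exact G.tail_ne_ext1 e₀ h3
    · cases u₀
      rw [hs] at h3
      simp at h3

lemma bud_head_inl (e : Fin G.nE) :
    budHead G ((budτ G).symm (.inl e)) = (budσ G).symm (.inl (G.head e)) := by
  unfold budHead; simp

lemma bud_tail_inl (e : Fin G.nE) :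
    budTail G ((budτ G).symm (.inl e)) = (budσ G).symm (.inl (G.tail e)) := by
  unfold budTail; simp

lemma bud_tail_bud : budTail G ((budτ G).symm (.inr ())) = (budσ G).symm (.inr ()) := by
  unfold budTail; simp

lemma bud_head_bud : budHead G ((budτ G).symm (.inr ())) = (budσ G).symm (.inl (G.ext 0)) := by
  unfold budHead; simp

lemma bud_ext0 : budExt G 0 = (budσ G).symm (.inr ()) := by
  unfold budExt; simp

lemma bud_ext1 : budExt G 1 = (budσ G).symm (.inl (G.ext 1)) := by
  unfold budExt; simp

lemma bud_wt_inl (l : ℤ) (v : Fin G.nV) (hv : v ≠ G.ext 0) :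
    budWt G l ((budσ G).symm (.inl v)) = G.wt v := by
  unfold budWt; simp [hv]

lemma bud_wt_bud (l : ℤ) : budWt G l ((budσ G).symm (.inl (G.ext 0))) = l := by
  unfold budWt; simp

lemma bud_budData (l : ℤ) (hl : -1 ≤ l) (hout : 1 ≤ G.outDeg (G.ext 0))
    (hneg : l = -1 → 2 ≤ G.outDeg (G.ext 0)) :
    BudData l G (bud G l hl hout hneg) (budσ G) (budτ G) :=
  ⟨fun e => bud_head_inl G e, fun e => bud_tail_inl G e, bud_tail_bud G, bud_head_bud G,
    (bud_ext0 G).symm ▸ rfl, (bud_ext1 G).symm ▸ rfl,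
    fun v hv => bud_wt_inl G l v hv, bud_wt_bud G l⟩

end Stmt14Aux

namespace Stmt14Aux
open WGraph

lemma two_le_nV (G : WGraph 2) : 2 ≤ G.nV := by
  simpa using Fintype.card_le_of_embedding G.ext

lemma delFin_symm_self {n : ℕ} (a : Fin n) : a = (delFin a).symm (.inr ()) := by
  conv_lhs => rw [← Equiv.symm_apply_apply (delFin a) a]
  rw [delFin_self]

/-- Projection deleting the first external vertex. -/
noncomputable def pV (G' : WGraph 2) (v : Fin G'.nV) : Fin (G'.nV - 1) :=
  Sum.elim id (fun _ => ⟨0, by have := two_le_nV G'; omega⟩) (delFin (G'.ext 0) v)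

lemma pV_spec {G' : WGraph 2} {v : Fin G'.nV} (h : v ≠ G'.ext 0) :
    (delFin (G'.ext 0)).symm (.inl (pV G' v)) = v := by
  obtain ⟨u, hu⟩ := delFin_exists_inl h
  unfold pV
  rw [hu]
  simp only [Sum.elim_inl, id_eq]
  rw [← hu, Equiv.symm_apply_apply]

lemma pV_symm (G' : WGraph 2) (v : Fin (G'.nV - 1)) :
    pV G' ((delFin (G'.ext 0)).symm (.inl v)) = v := by
  unfold pV
  simp

lemma pV_inj {G' : WGraph 2} {v w : Fin G'.nV} (hv : v ≠ G'.ext 0) (hw : w ≠ G'.ext 0)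
    (h : pV G' v = pV G' w) : v = w := by
  rw [← pV_spec hv, ← pV_spec hw, h]

section Unbud

variable (G' : WGraph 2) (e0 : Fin G'.nE)

noncomputable def unbudHead (e : Fin (G'.nE - 1)) : Fin (G'.nV - 1) :=
  pV G' (G'.head ((delFin e0).symm (.inl e)))

noncomputable def unbudTail (e : Fin (G'.nE - 1)) : Fin (G'.nV - 1) :=
  pV G' (G'.tail ((delFin e0).symm (.inl e)))

noncomputable def unbudExt (i : Fin 2) : Fin (G'.nV - 1) :=
  if i = 0 then pV G' (G'.head e0) else pV G' (G'.ext 1)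

noncomputable def unbudWt (v : Fin (G'.nV - 1)) : ℤ :=
  if v = pV G' (G'.head e0) then 0 else G'.wt ((delFin (G'.ext 0)).symm (.inl v))

lemma unbud_tail_ne (huniq : ∀ e, G'.tail e = G'.ext 0 → e = e0) (e : Fin (G'.nE - 1)) :
    G'.tail ((delFin e0).symm (.inl e)) ≠ G'.ext 0 := by
  intro h
  have h2 : (delFin e0) ((delFin e0).symm (.inl e)) = delFin e0 e0 := congrArg _ (huniq _ h)
  rw [Equiv.apply_symm_apply, delFin_self] at h2
  simp at h2

lemma unbud_edge_ne (e : Fin (G'.nE - 1)) : (delFin e0).symm (.inl e) ≠ e0 := by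
  intro h
  have h2 := congrArg (delFin e0) h
  rw [Equiv.apply_symm_apply, delFin_self] at h2
  simp at h2

lemma unbud_internal {v : Fin (G'.nV - 1)} (h0 : pV G' (G'.head e0) ≠ v)
    (h1 : pV G' (G'.ext 1) ≠ v) :
    ∀ i, G'.ext i ≠ (delFin (G'.ext 0)).symm (.inl v) := by
  intro i hi
  rcases fin2 i with rfl | rfl
  · have h2 := congrArg (delFin (G'.ext 0)) hi
    rw [delFin_self, Equiv.apply_symm_apply] at h2
    simp at h2
  · exact h1 (by rw [hi, pV_symm])

lemma inDeg_head_e0 (hin : ∀ e, G'.head e = G'.head e0 → e = e0) :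
    G'.inDeg (G'.head e0) = 1 := by
  show (univ.filter fun e => G'.head e = G'.head e0).card = 1
  rw [Finset.card_eq_one]
  refine ⟨e0, ?_⟩
  ext e
  simp only [Finset.mem_filter, Finset.mem_univ, true_and, Finset.mem_singleton]
  exact ⟨fun h => hin e h, fun h => by rw [h]⟩

/-- Removing the bud (the first external vertex together with its unique edge). -/
noncomputable def unbud (hte0 : G'.tail e0 = G'.ext 0)
    (huniq : ∀ e, G'.tail e = G'.ext 0 → e = e0)
    (hv0 : ∀ i, G'.ext i ≠ G'.head e0)
    (hin : ∀ e, G'.head e = G'.head e0 → e = e0) : WGraph 2 where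
  nV := G'.nV - 1
  nE := G'.nE - 1
  head := unbudHead G' e0
  tail := unbudTail G' e0
  ext := ⟨unbudExt G' e0, by
    intro a b hab
    rcases fin2 a with rfl | rfl <;> rcases fin2 b with rfl | rfl
    · rfl
    · exfalso
      unfold unbudExt at hab
      rw [if_pos rfl, if_neg (by decide : ¬ ((1 : Fin 2) = 0))] at hab
      exact hv0 1 (pV_inj (G'.head_ne_ext0 e0) (ext1_ne_ext0 G') hab).symm
    · exfalso
      unfold unbudExt at hab
      rw [if_neg (by decide : ¬ ((1 : Fin 2) = 0)), if_pos rfl] at hab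
      exact hv0 1 (pV_inj (ext1_ne_ext0 G') (G'.head_ne_ext0 e0) hab)
    · rfl⟩
  wt := unbudWt G' e0
  acyclic := by
    intro v hv
    refine G'.acyclic ((delFin (G'.ext 0)).symm (.inl v)) ?_
    refine Relation.TransGen.lift (fun u => (delFin (G'.ext 0)).symm (.inl u)) ?_ v v hv
    rintro a b ⟨e, ht, hh⟩
    refine ⟨(delFin e0).symm (.inl e), ?_, ?_⟩
    · rw [← ht]
      exact (pV_spec (unbud_tail_ne G' e0 huniq e)).symm
    · rw [← hh]
      exact (pV_spec (G'.head_ne_ext0 _)).symm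
  wt_ext := by
    intro i
    show unbudWt G' e0 (unbudExt G' e0 i) = 0
    rcases fin2 i with rfl | rfl
    · unfold unbudExt unbudWt
      rw [if_pos rfl, if_pos rfl]
    · unfold unbudExt unbudWt
      rw [if_neg (by decide : ¬ ((1 : Fin 2) = 0)),
        if_neg (fun h => hv0 1 (pV_inj (ext1_ne_ext0 G') (G'.head_ne_ext0 e0) h)),
        pV_spec (ext1_ne_ext0 G')]
      exact G'.wt_ext 1
  wt_ge := by
    intro v hint
    have h0 : pV G' (G'.head e0) ≠ v := fun h => hint 0 (by
      show unbudExt G' e0 0 = v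
      unfold unbudExt
      rw [if_pos rfl]
      exact h)
    have h1 : pV G' (G'.ext 1) ≠ v := fun h => hint 1 (by
      show unbudExt G' e0 1 = v
      unfold unbudExt
      rw [if_neg (by decide : ¬ ((1 : Fin 2) = 0))]
      exact h)
    show (-1 : ℤ) ≤ unbudWt G' e0 v
    unfold unbudWt
    rw [if_neg (fun h => h0 h.symm)]
    exact G'.wt_ge _ (unbud_internal G' e0 h0 h1)
  internal_in := by
    intro v hint
    have h0 : pV G' (G'.head e0) ≠ v := fun h => hint 0 (by
      show unbudExt G' e0 0 = v
      unfold unbudExt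
      rw [if_pos rfl]
      exact h)
    have h1 : pV G' (G'.ext 1) ≠ v := fun h => hint 1 (by
      show unbudExt G' e0 1 = v
      unfold unbudExt
      rw [if_neg (by decide : ¬ ((1 : Fin 2) = 0))]
      exact h)
    obtain ⟨e', he'⟩ := G'.internal_in _ (unbud_internal G' e0 h0 h1)
    have hne : e' ≠ e0 := by
      intro h
      subst h
      exact h0 (by rw [he', pV_symm])
    obtain ⟨e, he⟩ := delFin_exists_inl hne
    refine ⟨e, ?_⟩
    show unbudHead G' e0 e = v
    unfold unbudHead
    rw [← he, Equiv.symm_apply_apply, he', pV_symm]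
  internal_out := by
    intro v hint
    have h0 : pV G' (G'.head e0) ≠ v := fun h => hint 0 (by
      show unbudExt G' e0 0 = v
      unfold unbudExt
      rw [if_pos rfl]
      exact h)
    have h1 : pV G' (G'.ext 1) ≠ v := fun h => hint 1 (by
      show unbudExt G' e0 1 = v
      unfold unbudExt
      rw [if_neg (by decide : ¬ ((1 : Fin 2) = 0))]
      exact h)
    obtain ⟨e', he'⟩ := G'.internal_out _ (unbud_internal G' e0 h0 h1)
    have hne : e' ≠ e0 := by
      intro h
      subst h
      rw [hte0] at he'
      have h2 := congrArg (delFin (G'.ext 0)) he'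
      rw [delFin_self, Equiv.apply_symm_apply] at h2
      simp at h2
    obtain ⟨e, he⟩ := delFin_exists_inl hne
    refine ⟨e, ?_⟩
    show unbudTail G' e0 e = v
    unfold unbudTail
    rw [← he, Equiv.symm_apply_apply, he', pV_symm]
  wt_neg_deg := by
    intro v hint hwt
    have h0 : pV G' (G'.head e0) ≠ v := fun h => hint 0 (by
      show unbudExt G' e0 0 = v
      unfold unbudExt
      rw [if_pos rfl]
      exact h)
    have h1 : pV G' (G'.ext 1) ≠ v := fun h => hint 1 (by
      show unbudExt G' e0 1 = v
      unfold unbudExt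
      rw [if_neg (by decide : ¬ ((1 : Fin 2) = 0))]
      exact h)
    have hwt' : G'.wt ((delFin (G'.ext 0)).symm (.inl v)) = -1 := by
      have h2 : unbudWt G' e0 v = -1 := hwt
      unfold unbudWt at h2
      rwa [if_neg (fun h => h0 h.symm)] at h2
    have h3 := G'.wt_neg_deg _ (unbud_internal G' e0 h0 h1) hwt'
    have hIn : (univ.filter fun e' => G'.head e' = (delFin (G'.ext 0)).symm (.inl v)).card
        = (univ.filter fun e => unbudHead G' e0 e = v).card := by
      rw [card_filter_equiv_sum (delFin e0)]
      rw [if_neg ?hne, add_zero]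
      case hne =>
        rw [← delFin_symm_self e0]
        intro h
        exact h0 (by rw [h]; exact pV_symm G' v)
      apply congrArg
      apply Finset.filter_congr
      intro e _
      unfold unbudHead
      constructor
      · intro h
        rw [h, pV_symm]
      · intro h
        rw [← h]
        exact (pV_spec (G'.head_ne_ext0 _)).symm
    have hOut : (univ.filter fun e' => G'.tail e' = (delFin (G'.ext 0)).symm (.inl v)).card
        = (univ.filter fun e => unbudTail G' e0 e = v).card := by
      rw [card_filter_equiv_sum (delFin e0)]
      rw [if_neg ?hne, add_zero]
      case hne =>
        rw [← delFin_symm_self e0, hte0]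
        intro h
        have h2 := congrArg (delFin (G'.ext 0)) h
        rw [delFin_self, Equiv.apply_symm_apply] at h2
        simp at h2
      apply congrArg
      apply Finset.filter_congr
      intro e _
      unfold unbudTail
      constructor
      · intro h
        rw [h, pV_symm]
      · intro h
        rw [← h]
        exact (pV_spec (unbud_tail_ne G' e0 huniq e)).symm
    show 3 ≤ (univ.filter fun e => unbudHead G' e0 e = v).card
        + (univ.filter fun e => unbudTail G' e0 e = v).card
    rw [← hIn, ← hOut]
    exact h3
  first_source := by
    intro e i h hi
    have hi0 : i = 0 := Fin.ext hi
    subst hi0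
    have h2 : G'.head ((delFin e0).symm (.inl e)) = G'.head e0 := by
      refine pV_inj (G'.head_ne_ext0 _) (G'.head_ne_ext0 e0) ?_
      have h3 : unbudHead G' e0 e = unbudExt G' e0 0 := h
      unfold unbudHead unbudExt at h3
      rwa [if_pos rfl] at h3
    exact unbud_edge_ne G' e0 e (hin _ h2)
  last_sink := by
    intro e i h hi
    have hi1 : i = 1 := Fin.ext hi
    subst hi1
    have h2 : G'.tail ((delFin e0).symm (.inl e)) = G'.ext 1 := by
      refine pV_inj (unbud_tail_ne G' e0 huniq e) (ext1_ne_ext0 G') ?_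
      have h3 : unbudTail G' e0 e = unbudExt G' e0 1 := h
      unfold unbudTail unbudExt at h3
      rwa [if_neg (by decide : ¬ ((1 : Fin 2) = 0))] at h3
    exact G'.tail_ne_ext1 _ h2

lemma unbud_budData (hte0 : G'.tail e0 = G'.ext 0)
    (huniq : ∀ e, G'.tail e = G'.ext 0 → e = e0)
    (hv0 : ∀ i, G'.ext i ≠ G'.head e0)
    (hin : ∀ e, G'.head e = G'.head e0 → e = e0) :
    BudData (G'.wt (G'.head e0)) (unbud G' e0 hte0 huniq hv0 hin) G'
      (delFin (G'.ext 0)) (delFin e0) := by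
  refine ⟨?_, ?_, ?_, ?_, ?_, ?_, ?_, ?_⟩
  · intro e
    exact (pV_spec (G'.head_ne_ext0 ((delFin e0).symm (.inl e)))).symm
  · intro e
    exact (pV_spec (unbud_tail_ne G' e0 huniq e)).symm
  · show G'.tail ((delFin e0).symm (.inr ())) = (delFin (G'.ext 0)).symm (.inr ())
    rw [← delFin_symm_self e0, hte0]
    exact delFin_symm_self (G'.ext 0)
  · show G'.head ((delFin e0).symm (.inr ())) = (delFin (G'.ext 0)).symm (.inl (unbudExt G' e0 0))
    rw [← delFin_symm_self e0]
    unfold unbudExt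
    rw [if_pos rfl, pV_spec (G'.head_ne_ext0 e0)]
  · exact delFin_symm_self (G'.ext 0)
  · show G'.ext 1 = (delFin (G'.ext 0)).symm (.inl (unbudExt G' e0 1))
    unfold unbudExt
    rw [if_neg (by decide : ¬ ((1 : Fin 2) = 0)), pV_spec (ext1_ne_ext0 G')]
  · intro v hv
    show G'.wt ((delFin (G'.ext 0)).symm (.inl v)) = unbudWt G' e0 v
    unfold unbudWt
    rw [if_neg ?hv2]
    case hv2 =>
      intro h
      refine hv ?_
      show v = unbudExt G' e0 0
      unfold unbudExt
      rw [if_pos rfl]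
      exact h
  · show G'.wt _ = G'.wt (G'.head e0)
    apply congrArg
    have h3 : unbudExt G' e0 0 = pV G' (G'.head e0) := by
      unfold unbudExt
      rw [if_pos rfl]
    show (delFin (G'.ext 0)).symm (.inl (unbudExt G' e0 0)) = G'.head e0
    rw [h3, pV_spec (G'.head_ne_ext0 e0)]

end Unbud
end Stmt14Aux

namespace Stmt14Aux
open WGraph

lemma part1 (k : ℕ) (l : ℤ) (G G' : WGraph 2) (hD : BudDom k l G) (hB : Budded l G G') :
    G'.W = (k : ℤ) + 1 ∧ G'.outDeg (G'.ext 0) = 1 ∧ G'.inDeg (G'.ext 0) = 0 := by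
  obtain ⟨σ, τ, h⟩ := budded_iff.mp hB
  refine ⟨?_, h.outDeg_ext0, h.inDeg_ext0⟩
  rw [h.W_eq]
  rcases hD with ⟨rfl, hW, -⟩ | ⟨h0, h1, hW⟩ <;> rw [hW] <;> ring

lemma part2 (k : ℕ) (l : ℤ) (G : WGraph 2) (hD : BudDom k l G) : ∃ G', Budded l G G' := by
  have hl : -1 ≤ l := by rcases hD with ⟨rfl, -, -⟩ | ⟨h0, -, -⟩ <;> omega
  have hout : 1 ≤ G.outDeg (G.ext 0) := by
    rcases hD with ⟨-, -, hgt⟩ | ⟨h0, h1, hW⟩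
    · omega
    · by_contra hc
      have h2 : G.outDeg (G.ext 0) = 0 := by omega
      have h3 := G.W_eq_zero h2
      omega
  have hneg : l = -1 → 2 ≤ G.outDeg (G.ext 0) := by
    intro hl1
    rcases hD with ⟨-, -, hgt⟩ | ⟨h0, -, -⟩
    · omega
    · omega
  exact ⟨bud G l hl hout hneg, budded_iff.mpr ⟨_, _, bud_budData G l hl hout hneg⟩⟩

lemma part3 {l : ℤ} {G G' G'' : WGraph 2} (hB1 : Budded l G G') (hB2 : Budded l G G'') :
    G'.Iso G'' := by
  obtain ⟨σ₁, τ₁, h1⟩ := budded_iff.mp hB1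
  obtain ⟨σ₂, τ₂, h2⟩ := budded_iff.mp hB2
  refine ⟨σ₁.trans σ₂.symm, τ₁.trans τ₂.symm, ?_, ?_, ?_, ?_⟩
  · intro e
    rw [h2.head_eq, h1.head_eq]
    simp [Equiv.trans_apply]
  · intro e
    rw [h2.tail_eq, h1.tail_eq]
    simp [Equiv.trans_apply]
  · intro i
    rcases fin2 i with rfl | rfl
    · rw [h2.ext0, h1.ext0]
      simp [Equiv.trans_apply]
    · rw [h2.ext1, h1.ext1]
      simp [Equiv.trans_apply]
  · intro v
    rcases hs : σ₁ v with u | u₀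
    · have hv : v = σ₁.symm (.inl u) := by rw [← hs, Equiv.symm_apply_apply]
      by_cases hu : u = G.ext 0
      · have hL : (σ₁.trans σ₂.symm) v = σ₂.symm (.inl (G.ext 0)) := by
          rw [hv, hu]
          simp [Equiv.trans_apply]
        rw [hL, h2.wt_bud, hv, hu, h1.wt_bud]
      · have hL : (σ₁.trans σ₂.symm) v = σ₂.symm (.inl u) := by
          rw [hv]
          simp [Equiv.trans_apply]
        rw [hL, h2.wt_inl u hu, hv, h1.wt_inl u hu]
    · cases u₀
      have hv : v = σ₁.symm (.inr ()) := by rw [← hs, Equiv.symm_apply_apply]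
      have hL : (σ₁.trans σ₂.symm) v = σ₂.symm (.inr ()) := by
        rw [hv]
        simp [Equiv.trans_apply]
      rw [hL, ← h2.ext0, hv, ← h1.ext0, G'.wt_ext 0, G''.wt_ext 0]

lemma part4 {l l' : ℤ} {G H G' H' : WGraph 2}
    (hB1 : Budded l G G') (hB2 : Budded l' H H') (hiso : G'.Iso H') : l = l' ∧ G.Iso H := by
  obtain ⟨σ₁, τ₁, h1⟩ := budded_iff.mp hB1
  obtain ⟨σ₂, τ₂, h2⟩ := budded_iff.mp hB2
  obtain ⟨s, t, hh, ht, he, hw⟩ := hiso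
  have hbudedge : t (τ₁.symm (.inr ())) = τ₂.symm (.inr ()) := by
    have h3 : H'.tail (t (τ₁.symm (.inr ()))) = σ₂.symm (.inr ()) := by
      rw [ht, h1.tail_bud, ← h1.ext0, ← he 0, h2.ext0]
    have h4 := (h2.tail_eq_inr_iff _).mp h3
    rw [← h4, Equiv.symm_apply_apply]
  have hconv : s (σ₁.symm (.inl (G.ext 0))) = σ₂.symm (.inl (H.ext 0)) := by
    rw [← h1.head_bud, ← hh, hbudedge, h2.head_bud]
  have hl : l = l' := by
    rw [← h1.wt_bud, ← hw (σ₁.symm (.inl (G.ext 0))), hconv, h2.wt_bud]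
  refine ⟨hl, ?_⟩
  have hSinr : (σ₁.symm.trans (s.trans σ₂)) (.inr ()) = .inr () := by
    show σ₂ (s (σ₁.symm (.inr ()))) = .inr ()
    rw [← h1.ext0, ← he 0, h2.ext0, Equiv.apply_symm_apply]
  have hTinr : (τ₁.symm.trans (t.trans τ₂)) (.inr ()) = .inr () := by
    show τ₂ (t (τ₁.symm (.inr ()))) = .inr ()
    rw [hbudedge, Equiv.apply_symm_apply]
  set α := sumUnitCongr _ hSinr with hα
  set γ := sumUnitCongr _ hTinr with hγ
  have hαspec : ∀ v, s (σ₁.symm (.inl v)) = σ₂.symm (.inl (α v)) := by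
    intro v
    have h5 : σ₂ (s (σ₁.symm (.inl v))) = .inl (α v) := sumUnitCongr_spec _ hSinr v
    rw [← h5, Equiv.symm_apply_apply]
  have hγspec : ∀ e, t (τ₁.symm (.inl e)) = τ₂.symm (.inl (γ e)) := by
    intro e
    have h5 : τ₂ (t (τ₁.symm (.inl e))) = .inl (γ e) := sumUnitCongr_spec _ hTinr e
    rw [← h5, Equiv.symm_apply_apply]
  have hα0 : H.ext 0 = α (G.ext 0) := by
    have h5 : σ₂.symm (.inl (H.ext 0)) = σ₂.symm (.inl (α (G.ext 0))) := by
      rw [← hconv, hαspec]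
    simpa using σ₂.symm.injective h5
  refine ⟨α, γ, ?_, ?_, ?_, ?_⟩
  · intro e
    have h5 : σ₂.symm (.inl (H.head (γ e))) = σ₂.symm (.inl (α (G.head e))) := by
      rw [← h2.head_inl (γ e), ← hγspec, hh, h1.head_inl, hαspec]
    simpa using σ₂.symm.injective h5
  · intro e
    have h5 : σ₂.symm (.inl (H.tail (γ e))) = σ₂.symm (.inl (α (G.tail e))) := by
      rw [← h2.tail_inl (γ e), ← hγspec, ht, h1.tail_inl, hαspec]
    simpa using σ₂.symm.injective h5
  · intro i
    rcases fin2 i with rfl | rfl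
    · exact hα0
    · have h5 : σ₂.symm (.inl (H.ext 1)) = σ₂.symm (.inl (α (G.ext 1))) := by
        rw [← h2.ext1, ← hαspec, ← h1.ext1, he 1]
      simpa using σ₂.symm.injective h5
  · intro v
    by_cases hv : v = G.ext 0
    · subst hv
      rw [← hα0, H.wt_ext, G.wt_ext]
    · have hαv : α v ≠ H.ext 0 := fun hc => hv (α.injective (hc.trans hα0))
      rw [← h2.wt_inl (α v) hαv, ← hαspec, hw, h1.wt_inl v hv]

lemma part5 (k : ℕ) (hk : 1 ≤ k) (G' : WGraph 2) (hW : G'.W = (k : ℤ) + 1)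
    (hdeg : G'.outDeg (G'.ext 0) = 1) :
    ∃ (l : ℤ) (G : WGraph 2), BudDom k l G ∧ Budded l G G' := by
  obtain ⟨e0, he0⟩ := Finset.card_eq_one.mp hdeg
  have hte0 : G'.tail e0 = G'.ext 0 := by
    have h1 : e0 ∈ univ.filter fun e => G'.tail e = G'.ext 0 := he0 ▸ Finset.mem_singleton_self e0
    simpa using h1
  have huniq : ∀ e, G'.tail e = G'.ext 0 → e = e0 := by
    intro e he
    have h1 : e ∈ univ.filter fun e' => G'.tail e' = G'.ext 0 := by simp [he]
    rw [he0] at h1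
    simpa using h1
  have hne01 : G'.head e0 ≠ G'.ext 0 := G'.head_ne_ext0 e0
  have hne11 : G'.head e0 ≠ G'.ext 1 := by
    intro hv1
    have hall : ∀ e : Fin G'.nE, e = e0 := by
      intro e
      rcases (G'.reach_of_out (G'.tail e) ⟨e, rfl⟩).cases_head with h1 | ⟨c, hc1, hc2⟩
      · exact huniq e h1.symm
      · obtain ⟨e₁, ht₁, hh₁⟩ := hc1
        have he₁ : e₁ = e0 := huniq e₁ ht₁
        subst he₁
        exfalso
        rcases hc2.cases_head with h2 | ⟨d, hd1, hd2⟩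
        · exact G'.tail_ne_ext1 e (by rw [← h2, ← hh₁, hv1])
        · obtain ⟨e₂, ht₂, -⟩ := hd1
          exact G'.tail_ne_ext1 e₂ (by rw [ht₂, ← hh₁, hv1])
    have hnE : G'.nE = 1 := by
      simpa using Fintype.card_eq_one_iff.mpr ⟨e0, fun e => hall e⟩
    have hwt0 : ∀ v, G'.wt v = 0 := by
      intro v
      by_cases hi : ∀ i, G'.ext i ≠ v
      · obtain ⟨e, he⟩ := G'.internal_in v hi
        rw [hall e] at he
        exact absurd (hv1 ▸ he) (hi 1)
      · push_neg at hi
        obtain ⟨i, hi⟩ := hi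
        rw [← hi, G'.wt_ext]
    have hW1 : G'.W = 1 := by
      show (G'.nE : ℤ) + ∑ v, G'.wt v = 1
      rw [hnE]
      simp [hwt0]
    omega
  have hv0 : ∀ i, G'.ext i ≠ G'.head e0 :=
    internal_of_ne (fun h => hne01 h.symm) (fun h => hne11 h.symm)
  have hin : ∀ e, G'.head e = G'.head e0 → e = e0 := by
    intro e he
    by_contra hne
    have htne : G'.tail e ≠ G'.ext 0 := fun h => hne (huniq e h)
    rcases (G'.reach_of_out (G'.tail e) ⟨e, rfl⟩).cases_head with h1 | ⟨c, hc1, hc2⟩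
    · exact htne h1.symm
    · obtain ⟨e₁, ht₁, hh₁⟩ := hc1
      have he₁ : e₁ = e0 := huniq e₁ ht₁
      subst he₁
      have hcyc : Relation.TransGen G'.edgeRel (G'.head e₁) (G'.head e₁) := by
        refine Relation.TransGen.tail' ?_ ⟨e, rfl, he⟩
        rw [hh₁]
        exact hc2
      exact G'.acyclic _ hcyc
  have hBD := unbud_budData G' e0 hte0 huniq hv0 hin
  set l := G'.wt (G'.head e0) with hldef
  set G := unbud G' e0 hte0 huniq hv0 hin with hGdef
  have hBudded : Budded l G G' := budded_iff.mpr ⟨_, _, hBD⟩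
  have hWG : G.W = (k : ℤ) - l := by
    have h3 := hBD.W_eq
    rw [← hGdef] at h3
    omega
  have hl1 : -1 ≤ l := G'.wt_ge _ hv0
  have hext0 : (delFin (G'.ext 0)).symm (.inl (G.ext 0)) = G'.head e0 :=
    hBD.head_bud.symm.trans (congrArg G'.head (delFin_symm_self e0).symm)
  have houtdeg : G.outDeg (G.ext 0) = G'.outDeg (G'.head e0) :=
    (hBD.outDeg_inl (G.ext 0)).symm.trans (congrArg G'.outDeg hext0)
  by_cases hneg : l = -1
  · refine ⟨l, G, Or.inl ⟨hneg, by omega, ?_⟩, hBudded⟩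
    have h6 : G'.inDeg (G'.head e0) = 1 := inDeg_head_e0 G' e0 hin
    have h7 : 3 ≤ G'.inDeg (G'.head e0) + G'.outDeg (G'.head e0) :=
      G'.wt_neg_deg (G'.head e0) hv0 hneg
    omega
  · have hl0 : 0 ≤ l := by omega
    have hnE : 1 ≤ G.nE := by
      obtain ⟨e', he'⟩ := G'.internal_out _ hv0
      have hne : e' ≠ e0 := by
        intro hc
        subst hc
        rw [hte0] at he'
        exact hv0 0 he'
      have h2 : 2 ≤ G'.nE := by
        have h3 : Nontrivial (Fin G'.nE) := ⟨⟨e', e0, hne⟩⟩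
        exact (by simpa using Fintype.one_lt_card_iff_nontrivial.mpr h3 : 1 < G'.nE)
      show 1 ≤ G'.nE - 1
      omega
    have h8 := G.one_le_W hnE
    exact ⟨l, G, Or.inr ⟨hl0, by omega, hWG⟩, hBudded⟩

end Stmt14Aux

namespace Stmt14Aux
open WGraph

lemma part6 {l : ℤ} {G G' : WGraph 2} (hB : Budded l G G') : G'.autCard = G.autCard := by
  classical
  obtain ⟨σ, τ, h⟩ := budded_iff.mp hB
  set S : (Fin G.nV ≃ Fin G.nV) → (Fin G'.nV ≃ Fin G'.nV) :=
    fun a => σ.trans ((a.sumCongr (Equiv.refl Unit)).trans σ.symm) with hSdef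
  set T : (Fin G.nE ≃ Fin G.nE) → (Fin G'.nE ≃ Fin G'.nE) :=
    fun g => τ.trans ((g.sumCongr (Equiv.refl Unit)).trans τ.symm) with hTdef
  have hS1 : ∀ a v, S a (σ.symm (.inl v)) = σ.symm (.inl (a v)) := by
    intro a v
    show σ.symm ((a.sumCongr (Equiv.refl Unit)) (σ (σ.symm (.inl v)))) = _
    rw [Equiv.apply_symm_apply]
    rfl
  have hS2 : ∀ a, S a (σ.symm (.inr ())) = σ.symm (.inr ()) := by
    intro a
    show σ.symm ((a.sumCongr (Equiv.refl Unit)) (σ (σ.symm (.inr ())))) = _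
    rw [Equiv.apply_symm_apply]
    rfl
  have hT1 : ∀ g e, T g (τ.symm (.inl e)) = τ.symm (.inl (g e)) := by
    intro g e
    show τ.symm ((g.sumCongr (Equiv.refl Unit)) (τ (τ.symm (.inl e)))) = _
    rw [Equiv.apply_symm_apply]
    rfl
  have hT2 : ∀ g, T g (τ.symm (.inr ())) = τ.symm (.inr ()) := by
    intro g
    show τ.symm ((g.sumCongr (Equiv.refl Unit)) (τ (τ.symm (.inr ())))) = _
    rw [Equiv.apply_symm_apply]
    rfl
  have hF : ∀ (a : Fin G.nV ≃ Fin G.nV) (g : Fin G.nE ≃ Fin G.nE),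
      (∀ e, G.head (g e) = a (G.head e)) → (∀ e, G.tail (g e) = a (G.tail e)) →
      (∀ i, G.ext i = a (G.ext i)) → (∀ v, G.wt (a v) = G.wt v) →
      (∀ e, G'.head (T g e) = S a (G'.head e)) ∧ (∀ e, G'.tail (T g e) = S a (G'.tail e)) ∧
      (∀ i, G'.ext i = S a (G'.ext i)) ∧ (∀ v, G'.wt (S a v) = G'.wt v) := by
    intro a g hch hct hce hcw
    have hae0 : a (G.ext 0) = G.ext 0 := (hce 0).symm
    refine ⟨?_, ?_, ?_, ?_⟩
    · intro e'
      rcases hs : τ e' with e | u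
      · have he' : e' = τ.symm (.inl e) := by rw [← hs, Equiv.symm_apply_apply]
        rw [he', hT1 g e, h.head_inl (g e), h.head_inl e, hS1, hch e]
      · cases u
        have he' : e' = τ.symm (.inr ()) := by rw [← hs, Equiv.symm_apply_apply]
        rw [he', hT2 g, h.head_bud, hS1, hae0]
    · intro e'
      rcases hs : τ e' with e | u
      · have he' : e' = τ.symm (.inl e) := by rw [← hs, Equiv.symm_apply_apply]
        rw [he', hT1 g e, h.tail_inl (g e), h.tail_inl e, hS1, hct e]
      · cases u
        have he' : e' = τ.symm (.inr ()) := by rw [← hs, Equiv.symm_apply_apply]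
        rw [he', hT2 g, h.tail_bud, hS2]
    · intro i
      rcases fin2 i with rfl | rfl
      · rw [h.ext0, hS2]
      · rw [h.ext1, hS1, ← hce 1]
    · intro v'
      rcases hs : σ v' with u | u₀
      · have hv' : v' = σ.symm (.inl u) := by rw [← hs, Equiv.symm_apply_apply]
        rw [hv', hS1]
        by_cases hu : u = G.ext 0
        · rw [hu, hae0]
        · have hau : a u ≠ G.ext 0 := fun hc => hu (a.injective (hc.trans hae0.symm))
          rw [h.wt_inl _ hau, h.wt_inl _ hu, hcw u]
      · cases u₀
        have hv' : v' = σ.symm (.inr ()) := by rw [← hs, Equiv.symm_apply_apply]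
        rw [hv', hS2]
  have hFinj : ∀ a a' : Fin G.nV ≃ Fin G.nV, S a = S a' → a = a' := by
    intro a a' hSS
    apply Equiv.ext
    intro v
    have h1 : S a (σ.symm (.inl v)) = S a' (σ.symm (.inl v)) := by rw [hSS]
    rw [hS1, hS1] at h1
    simpa using σ.symm.injective h1
  have hTinj : ∀ g g' : Fin G.nE ≃ Fin G.nE, T g = T g' → g = g' := by
    intro g g' hTT
    apply Equiv.ext
    intro e
    have h1 : T g (τ.symm (.inl e)) = T g' (τ.symm (.inl e)) := by rw [hTT]
    rw [hT1, hT1] at h1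
    simpa using τ.symm.injective h1
  have hFsurj : ∀ (Sp : Fin G'.nV ≃ Fin G'.nV) (Tp : Fin G'.nE ≃ Fin G'.nE),
      (∀ e, G'.head (Tp e) = Sp (G'.head e)) → (∀ e, G'.tail (Tp e) = Sp (G'.tail e)) →
      (∀ i, G'.ext i = Sp (G'.ext i)) → (∀ v, G'.wt (Sp v) = G'.wt v) →
      ∃ (a : Fin G.nV ≃ Fin G.nV) (g : Fin G.nE ≃ Fin G.nE),
        ((∀ e, G.head (g e) = a (G.head e)) ∧ (∀ e, G.tail (g e) = a (G.tail e)) ∧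
        (∀ i, G.ext i = a (G.ext i)) ∧ (∀ v, G.wt (a v) = G.wt v)) ∧ S a = Sp ∧ T g = Tp := by
    intro Sp Tp hh ht he hw
    have hfix0 : Sp (σ.symm (.inr ())) = σ.symm (.inr ()) := by rw [← h.ext0, ← he 0]
    have hTfix : Tp (τ.symm (.inr ())) = τ.symm (.inr ()) := by
      have h3 : G'.tail (Tp (τ.symm (.inr ()))) = σ.symm (.inr ()) := by
        rw [ht, h.tail_bud, hfix0]
      have h4 := (h.tail_eq_inr_iff _).mp h3
      have h5 := congrArg τ.symm h4
      rwa [Equiv.symm_apply_apply] at h5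
    have hfixc : Sp (σ.symm (.inl (G.ext 0))) = σ.symm (.inl (G.ext 0)) := by
      rw [← h.head_bud, ← hh, hTfix]
    have hSfix : (σ.symm.trans (Sp.trans σ)) (.inr ()) = .inr () := by
      show σ (Sp (σ.symm (.inr ()))) = .inr ()
      rw [hfix0, Equiv.apply_symm_apply]
    have hTfix2 : (τ.symm.trans (Tp.trans τ)) (.inr ()) = .inr () := by
      show τ (Tp (τ.symm (.inr ()))) = .inr ()
      rw [hTfix, Equiv.apply_symm_apply]
    set a := sumUnitCongr _ hSfix with hadef
    set g := sumUnitCongr _ hTfix2 with hgdef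
    have haspec : ∀ v, Sp (σ.symm (.inl v)) = σ.symm (.inl (a v)) := by
      intro v
      have h5 : σ (Sp (σ.symm (.inl v))) = .inl (a v) := sumUnitCongr_spec _ hSfix v
      rw [← h5, Equiv.symm_apply_apply]
    have hgspec : ∀ e, Tp (τ.symm (.inl e)) = τ.symm (.inl (g e)) := by
      intro e
      have h5 : τ (Tp (τ.symm (.inl e))) = .inl (g e) := sumUnitCongr_spec _ hTfix2 e
      rw [← h5, Equiv.symm_apply_apply]
    have hae0 : a (G.ext 0) = G.ext 0 := by
      have h5 : σ.symm (.inl (a (G.ext 0))) = σ.symm (.inl (G.ext 0)) := by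
        rw [← haspec, hfixc]
      simpa using σ.symm.injective h5
    refine ⟨a, g, ⟨?_, ?_, ?_, ?_⟩, ?_, ?_⟩
    · intro e
      have h5 : σ.symm (.inl (G.head (g e))) = σ.symm (.inl (a (G.head e))) := by
        rw [← h.head_inl (g e), ← hgspec, hh, h.head_inl e, haspec]
      simpa using σ.symm.injective h5
    · intro e
      have h5 : σ.symm (.inl (G.tail (g e))) = σ.symm (.inl (a (G.tail e))) := by
        rw [← h.tail_inl (g e), ← hgspec, ht, h.tail_inl e, haspec]
      simpa using σ.symm.injective h5
    · intro i
      rcases fin2 i with rfl | rfl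
      · exact hae0.symm
      · have h5 : σ.symm (.inl (a (G.ext 1))) = σ.symm (.inl (G.ext 1)) := by
          rw [← haspec, ← h.ext1, ← he 1]
        have h6 := σ.symm.injective h5
        simp only [Sum.inl.injEq] at h6
        exact h6.symm
    · intro v
      by_cases hu : v = G.ext 0
      · rw [hu, hae0]
      · have hau : a v ≠ G.ext 0 := fun hc => hu (a.injective (hc.trans hae0.symm))
        rw [← h.wt_inl _ hau, ← haspec, hw, h.wt_inl _ hu]
    · apply Equiv.ext
      intro v'
      rcases hs : σ v' with u | u₀
      · have hv' : v' = σ.symm (.inl u) := by rw [← hs, Equiv.symm_apply_apply]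
        rw [hv', hS1, ← haspec]
      · cases u₀
        have hv' : v' = σ.symm (.inr ()) := by rw [← hs, Equiv.symm_apply_apply]
        rw [hv', hS2]
        exact hfix0.symm
    · apply Equiv.ext
      intro e'
      rcases hs : τ e' with e | u
      · have he' : e' = τ.symm (.inl e) := by rw [← hs, Equiv.symm_apply_apply]
        rw [he', hT1, ← hgspec]
      · cases u
        have he' : e' = τ.symm (.inr ()) := by rw [← hs, Equiv.symm_apply_apply]
        rw [he', hT2]
        exact hTfix.symm
  unfold WGraph.autCard
  apply Nat.card_congr
  apply Equiv.symm
  refine Equiv.ofBijective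
    (fun p => ⟨(S p.1.1, T p.1.2), hF p.1.1 p.1.2 p.2.1 p.2.2.1 p.2.2.2.1 p.2.2.2.2⟩)
    ⟨?_, ?_⟩
  · intro p q hpq
    have h1 := congrArg Subtype.val hpq
    have h2 : S p.1.1 = S q.1.1 := congrArg Prod.fst h1
    have h3 : T p.1.2 = T q.1.2 := congrArg Prod.snd h1
    apply Subtype.ext
    exact Prod.ext (hFinj _ _ h2) (hTinj _ _ h3)
  · rintro ⟨⟨Sp, Tp⟩, hc1, hc2, hc3, hc4⟩
    obtain ⟨a, g, hconds, k5, k6⟩ := hFsurj Sp Tp hc1 hc2 hc3 hc4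
    refine ⟨⟨(a, g), hconds⟩, ?_⟩
    apply Subtype.ext
    show (S a, T g) = (Sp, Tp)
    rw [k5, k6]

end Stmt14Aux

/-- For every `k ≥ 1`, the budding construction defines a bijection
`B : 𝒜₂^{>1}(k+1) ∪ ⋃_{l=0}^{k-1} 𝒜₂(k-l) → 𝒜₂^1(k+1)` of isomorphism classes, and this
bijection preserves the size of the automorphism group: `|Aut(B(G))| = |Aut(G)|`.
Explicitly: budding is total and well defined up to isomorphism on the domain, lands in
`𝒜₂^1(k+1)`, is injective and surjective on isomorphism classes, and preserves `|Aut|`. -/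
theorem statement14 (k : ℕ) (hk : 1 ≤ k) :
    -- budding maps the domain into 𝒜₂¹(k+1)
    (∀ (l : ℤ) (G G' : WGraph 2), BudDom k l G → Budded l G G' →
      G'.W = (k : ℤ) + 1 ∧ G'.outDeg (G'.ext 0) = 1 ∧ G'.inDeg (G'.ext 0) = 0) ∧
    -- every graph in the domain admits a budding
    (∀ (l : ℤ) (G : WGraph 2), BudDom k l G → ∃ G', Budded l G G') ∧
    -- the budded graph is well defined up to isomorphism
    (∀ (l : ℤ) (G G' G'' : WGraph 2), BudDom k l G → Budded l G G' → Budded l G G'' →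
      G'.Iso G'') ∧
    -- budding is injective on isomorphism classes of the domain
    (∀ (l l' : ℤ) (G H G' H' : WGraph 2), BudDom k l G → BudDom k l' H →
      Budded l G G' → Budded l' H H' → G'.Iso H' → l = l' ∧ G.Iso H) ∧
    -- budding is surjective onto 𝒜₂¹(k+1)
    (∀ G' : WGraph 2, G'.W = (k : ℤ) + 1 → G'.outDeg (G'.ext 0) = 1 →
      ∃ (l : ℤ) (G : WGraph 2), BudDom k l G ∧ Budded l G G') ∧
    -- budding preserves the size of the automorphism group
    (∀ (l : ℤ) (G G' : WGraph 2), BudDom k l G → Budded l G G' →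
      G'.autCard = G.autCard) := by
  refine ⟨?_, ?_, ?_, ?_, ?_, ?_⟩
  · intro l G G' hD hB
    exact Stmt14Aux.part1 k l G G' hD hB
  · intro l G hD
    exact Stmt14Aux.part2 k l G hD
  · intro l G G' G'' _ hB1 hB2
    exact Stmt14Aux.part3 hB1 hB2
  · intro l l' G H G' H' _ _ hB1 hB2 hiso
    exact Stmt14Aux.part4 hB1 hB2 hiso
  · intro G' hW hdeg
    exact Stmt14Aux.part5 k hk G' hW hdeg
  · intro l G G' _ hB
    exact Stmt14Aux.part6 hB
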